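/- arXiv:math-ph/0212001 — 7 statements merged into one kernel-verified Lean document; each statement's English description precedes it below -/
import Mathlib

section
/- If P and Q are orthogonal projections on a finite-dimensional complex inner product space such that P + Q is invertible, then P(P+Q)^{-1}Q = Q(P+Q)^{-1}P = (1/2)·R, where R is the orthogonal projection onto the intersection of the ranges of P and Q. -/
/-- If `P` and `Q` are orthogonal projections on a finite-dimensional complex inner product
space such that `P + Q` is invertible, then `P(P+Q)⁻¹Q = Q(P+Q)⁻¹P = (1/2)·R`, where `R` is
the orthogonal projection onto the intersection of the ranges of `P` and `Q`. -/
theorem stmt_0 {H : Type*} [NormedAddCommGroup H] [InnerProductSpace ℂ H]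
    [FiniteDimensional ℂ H] (P Q R : H →ₗ[ℂ] H)
    (hPsym : P.IsSymmetric) (hPidem : P * P = P)
    (hQsym : Q.IsSymmetric) (hQidem : Q * Q = Q)
    (hRsym : R.IsSymmetric) (hRidem : R * R = R)
    (hRrange : LinearMap.range R = LinearMap.range P ⊓ LinearMap.range Q)
    (hinv : IsUnit (P + Q)) :
    P * Ring.inverse (P + Q) * Q = (1/2 : ℂ) • R ∧
      Q * Ring.inverse (P + Q) * P = (1/2 : ℂ) • R := by
  have hPstar : star P = P := (LinearMap.isSymmetric_iff_isSelfAdjoint P).mp hPsym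
  have hQstar : star Q = Q := (LinearMap.isSymmetric_iff_isSelfAdjoint Q).mp hQsym
  have hRstar : star R = R := (LinearMap.isSymmetric_iff_isSelfAdjoint R).mp hRsym
  set S := P + Q with hSdef
  set T := Ring.inverse S with hTdef
  have hST : S * T = 1 := Ring.mul_inverse_cancel S hinv
  have hTS : T * S = 1 := Ring.inverse_mul_cancel S hinv
  have hSstar : star S = S := by rw [hSdef, star_add, hPstar, hQstar]
  have hTstar : star T = T := by
    have h1 : star T * S = 1 := by
      calc star T * S = star T * star S := by rw [hSstar]
        _ = star (S * T) := (star_mul S T).symm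
        _ = 1 := by rw [hST, star_one]
    calc star T = star T * (S * T) := by rw [hST, mul_one]
      _ = (star T * S) * T := by rw [mul_assoc]
      _ = T := by rw [h1, one_mul]
  have hPfix : ∀ y : H, y ∈ LinearMap.range P → P y = y := by
    rintro y ⟨z, rfl⟩
    rw [← Module.End.mul_apply, hPidem]
  have hQfix : ∀ y : H, y ∈ LinearMap.range Q → Q y = y := by
    rintro y ⟨z, rfl⟩
    rw [← Module.End.mul_apply, hQidem]
  have hRfix : ∀ y : H, y ∈ LinearMap.range R → R y = y := by
    rintro y ⟨z, rfl⟩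
    rw [← Module.End.mul_apply, hRidem]
  have hRmem : ∀ x : H, R x ∈ LinearMap.range P ⊓ LinearMap.range Q := by
    intro x
    rw [← hRrange]
    exact ⟨x, rfl⟩
  have hPR : P * R = R := by
    ext x
    exact hPfix (R x) (hRmem x).1
  have hQR : Q * R = R := by
    ext x
    exact hQfix (R x) (hRmem x).2
  have hSR : S * R = (2 : ℂ) • R := by
    rw [hSdef, add_mul, hPR, hQR, two_smul]
  have hTR : T * R = (1/2 : ℂ) • R := by
    have hR2 : R = (1/2 : ℂ) • (S * R) := by
      rw [hSR, smul_smul]; norm_num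
    calc T * R = T * ((1/2 : ℂ) • (S * R)) := by rw [← hR2]
      _ = (1/2 : ℂ) • (T * S * R) := by rw [mul_smul_comm, mul_assoc]
      _ = (1/2 : ℂ) • R := by rw [hTS, one_mul]
  -- A = P T Q equals Q T P
  have hAeq : P * T * Q = Q * T * P := by
    have h1 : P * T * Q = Q - Q * T * Q := by
      have : P = S - Q := by rw [hSdef]; abel
      rw [this, sub_mul, sub_mul, hST, one_mul]
    have h2 : Q * T * P = Q - Q * T * Q := by
      have : P = S - Q := by rw [hSdef]; abel
      rw [this, mul_sub, mul_assoc Q T S, hTS, mul_one]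
    rw [h1, h2]
  have hAstar : star (P * T * Q) = P * T * Q := by
    rw [star_mul, star_mul, hPstar, hQstar, hTstar, hAeq, mul_assoc]
  have hARange : ∀ x : H, (P * T * Q) x ∈ LinearMap.range R := by
    intro x
    rw [hRrange]
    constructor
    · exact ⟨(T * Q) x, by simp [Module.End.mul_apply]⟩
    · rw [hAeq]
      exact ⟨(T * P) x, by simp [Module.End.mul_apply]⟩
  have hRA : R * (P * T * Q) = P * T * Q := by
    ext x
    exact hRfix _ (hARange x)
  have hAR : (P * T * Q) * R = (1/2 : ℂ) • R := by
    calc (P * T * Q) * R = P * (T * (Q * R)) := by rw [mul_assoc, mul_assoc]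
      _ = P * ((1/2 : ℂ) • R) := by rw [hQR, hTR]
      _ = (1/2 : ℂ) • (P * R) := by rw [mul_smul_comm]
      _ = (1/2 : ℂ) • R := by rw [hPR]
  have hfinal : P * T * Q = (1/2 : ℂ) • R := by
    have h := congrArg star hAR
    rw [star_mul, hRstar, hAstar, star_smul, hRstar, hRA] at h
    simpa using h
  exact ⟨hfinal, hAeq ▸ hfinal⟩
end

section
/- If P and Q are orthogonal projections on a finite-dimensional complex inner product space with P + Q invertible, then P(P+Q)^{-1}P = P − (1/2)·R, where R is the orthogonal projection onto the intersection of the ranges of P and Q. -/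
private lemma fix_of_idem' {H : Type*} [NormedAddCommGroup H] [InnerProductSpace ℂ H]
    {E : H →ₗ[ℂ] H} (h : E * E = E) {x : H} (hx : x ∈ LinearMap.range E) : E x = x := by
  obtain ⟨y, rfl⟩ := hx
  simpa [Module.End.mul_apply] using DFunLike.congr_fun h y

private lemma sa_idem_ext' {H : Type*} [NormedAddCommGroup H] [InnerProductSpace ℂ H]
    [FiniteDimensional ℂ H] {A B : H →ₗ[ℂ] H}
    (hA : IsSelfAdjoint A) (hB : IsSelfAdjoint B)
    (hA2 : A * A = A) (hB2 : B * B = B)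
    (h : LinearMap.range A = LinearMap.range B) : A = B := by
  have hAB : A * B = B := by
    ext x
    simpa [Module.End.mul_apply] using
      fix_of_idem' hA2 (h ▸ LinearMap.mem_range_self B x)
  have hBA : B * A = A := by
    ext x
    simpa [Module.End.mul_apply] using
      fix_of_idem' hB2 (h ▸ LinearMap.mem_range_self A x)
  have h3 : star (B * A) = star A := congrArg star hBA
  rw [star_mul, hA.star_eq, hB.star_eq] at h3
  exact h3.symm.trans hAB

/-- If `P` and `Q` are orthogonal projections on a finite-dimensional complex inner product
space with `P + Q` invertible, then `P(P+Q)⁻¹P = P − (1/2)·R`, where `R` is the orthogonal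
projection onto the intersection of the ranges of `P` and `Q`. -/
theorem stmt_1 {H : Type*} [NormedAddCommGroup H] [InnerProductSpace ℂ H]
    [FiniteDimensional ℂ H] (P Q R : H →ₗ[ℂ] H)
    (hPsym : P.IsSymmetric) (hPidem : P * P = P)
    (hQsym : Q.IsSymmetric) (hQidem : Q * Q = Q)
    (hRsym : R.IsSymmetric) (hRidem : R * R = R)
    (hRrange : LinearMap.range R = LinearMap.range P ⊓ LinearMap.range Q)
    (hinv : IsUnit (P + Q)) :
    P * Ring.inverse (P + Q) * P = P - (1/2 : ℂ) • R := by
  set S := P + Q with hSdef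
  have hPsa : IsSelfAdjoint P := (LinearMap.isSymmetric_iff_isSelfAdjoint P).mp hPsym
  have hQsa : IsSelfAdjoint Q := (LinearMap.isSymmetric_iff_isSelfAdjoint Q).mp hQsym
  have hRsa : IsSelfAdjoint R := (LinearMap.isSymmetric_iff_isSelfAdjoint R).mp hRsym
  have hSsa : IsSelfAdjoint S := hPsa.add hQsa
  set N := Ring.inverse S with hNdef
  have hSN : S * N = 1 := Ring.mul_inverse_cancel S hinv
  have hNS : N * S = 1 := Ring.inverse_mul_cancel S hinv
  have hNsa : IsSelfAdjoint N := by
    have h1 : star N * S = 1 := by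
      have := congrArg star hSN
      simpa [star_mul, hSsa.star_eq] using this
    show star N = N
    calc star N = star N * (S * N) := by rw [hSN, mul_one]
      _ = (star N * S) * N := by rw [mul_assoc]
      _ = N := by rw [h1, one_mul]
  set T := P * N * Q with hTdef
  have hPNS : P * N * S = P := by rw [mul_assoc, hNS, mul_one]
  have hSNP : S * N * P = P := by rw [hSN, one_mul]
  have hTalt : Q * N * P = T := by
    have h1 : P * N * P + P * N * Q = P := by
      calc P * N * P + P * N * Q = P * N * (P + Q) := by rw [mul_add]
        _ = P := hPNS
    have h2 : P * N * P + Q * N * P = P := by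
      calc P * N * P + Q * N * P = (P + Q) * (N * P) := by
            rw [add_mul, mul_assoc, mul_assoc]
        _ = P := by rw [← mul_assoc, hSNP]
    have := h1.trans h2.symm
    exact (add_left_cancel this).symm
  have hTsa : IsSelfAdjoint T := by
    show star T = T
    rw [hTdef, star_mul, star_mul, hPsa.star_eq, hQsa.star_eq, hNsa.star_eq,
      ← mul_assoc, hTalt]
  have hPT : P * T = T := by rw [hTdef, ← mul_assoc, ← mul_assoc, hPidem]
  have hTQ : T * Q = T := by rw [hTdef, mul_assoc, mul_assoc, hQidem, ← mul_assoc]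
  have hTP : T * P = T := by
    rw [← hTalt, mul_assoc, mul_assoc, hPidem, ← mul_assoc]
  have hTS : T * S = (2 : ℂ) • T := by
    rw [hSdef, mul_add, hTP, hTQ, two_smul]
  have hTN : T * N = (1/2 : ℂ) • T := by
    have h1 : (2 : ℂ) • (T * N) = T := by
      calc (2 : ℂ) • (T * N) = ((2 : ℂ) • T) * N := by rw [smul_mul_assoc]
        _ = (T * S) * N := by rw [hTS]
        _ = T * (S * N) := by rw [mul_assoc]
        _ = T := by rw [hSN, mul_one]
    calc T * N = (1/2 : ℂ) • ((2 : ℂ) • (T * N)) := by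
          rw [smul_smul]; norm_num
      _ = (1/2 : ℂ) • T := by rw [h1]
  have hTT : T * T = (1/2 : ℂ) • T := by
    calc T * T = T * (P * N * Q) := by rw [← hTdef]
      _ = ((T * P) * N) * Q := by rw [← mul_assoc, ← mul_assoc]
      _ = (T * N) * Q := by rw [hTP]
      _ = (1/2 : ℂ) • (T * Q) := by rw [hTN, smul_mul_assoc]
      _ = (1/2 : ℂ) • T := by rw [hTQ]
  set E := (2 : ℂ) • T with hEdef
  have hEsa : IsSelfAdjoint E := by
    show star E = E
    rw [hEdef, star_smul, hTsa.star_eq]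
    norm_num
  have hEE : E * E = E := by
    rw [hEdef, smul_mul_assoc, mul_smul_comm, hTT, smul_smul, smul_smul]
    norm_num
  have hErange : LinearMap.range E = LinearMap.range R := by
    rw [hRrange]
    apply le_antisymm
    · apply le_inf
      · rintro _ ⟨x, rfl⟩
        refine ⟨(2 : ℂ) • (N (Q x)), ?_⟩
        simp [hEdef, hTdef, Module.End.mul_apply, map_smul]
      · rintro _ ⟨x, rfl⟩
        refine ⟨(2 : ℂ) • (N (P x)), ?_⟩
        have : E x = Q ((2 : ℂ) • (N (P x))) := by
          rw [hEdef, ← hTalt]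
          simp [Module.End.mul_apply, map_smul]
        simp [this]
    · rintro x ⟨hxP, hxQ⟩
      have hPx : P x = x := fix_of_idem' hPidem hxP
      have hQx : Q x = x := fix_of_idem' hQidem hxQ
      have hSx : S x = (2 : ℂ) • x := by
        rw [hSdef]
        simp [LinearMap.add_apply, hPx, hQx, two_smul]
      have hNx : N x = (1/2 : ℂ) • x := by
        have h1 : N (S x) = x := by
          simpa [Module.End.mul_apply] using DFunLike.congr_fun hNS x
        rw [hSx, map_smul] at h1
        calc N x = (1/2 : ℂ) • ((2 : ℂ) • N x) := by rw [smul_smul]; norm_num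
          _ = (1/2 : ℂ) • x := by rw [h1]
      refine ⟨x, ?_⟩
      rw [hEdef]
      simp only [LinearMap.smul_apply, hTdef, Module.End.mul_apply, hQx, hNx,
        map_smul, hPx, smul_smul]
      norm_num
  have hER : E = R := sa_idem_ext' hEsa hRsa hEE hRidem hErange
  have hPNP : P * N * P = P - T := by
    have h1 : P * N * P + P * N * Q = P := by
      calc P * N * P + P * N * Q = P * N * (P + Q) := by rw [mul_add]
        _ = P := hPNS
    rw [← hTdef] at h1
    linear_combination (norm := abel) h1
  rw [hPNP, ← hER, hEdef, smul_smul]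
  norm_num
end

section
/- Let A, B be n×n complex matrices with (A,B) of maximal rank, and let U be a unitary matrix leaving Ker A and Ker B invariant. If a matrix C satisfies AUA⋆ = C·P_A and BUB⋆ = C·P_B (where P_A, P_B are the orthogonal projections onto Ran A, Ran B), then C is invertible. -/
/-!
Since `A A⋆ A = A`, every `x` differs from `A⋆ A x` by a vector of `Ker A`, and `U` keeps that
vector in `Ker A`; hence `A (U x) = A U A⋆ (A x) = C P_A (A x) = C (A x)`. As `U` is invertible,
`Ran A ⊆ Ran C`, and likewise `Ran B ⊆ Ran C`. Maximal rank of `(A, B)` means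
`Ran A + Ran B = ℂⁿ`, so `C` is surjective, hence invertible.
-/

open Matrix

/-- `X` satisfies the four Penrose conditions for `A`. -/
def IsMoorePenrose {n : ℕ} (A X : Matrix (Fin n) (Fin n) ℂ) : Prop :=
  A * X * A = A ∧ X * A * X = X ∧ (A * X)ᴴ = A * X ∧ (X * A)ᴴ = X * A

open LinearMap

lemma Matrix.range_mulVecLin_fromCols {m n₁ n₂ R : Type*} [CommRing R] [Fintype n₁]
    [Fintype n₂] (A : Matrix m n₁ R) (B : Matrix m n₂ R) :
    range (fromCols A B).mulVecLin = range A.mulVecLin ⊔ range B.mulVecLin := by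
  ext y
  simp only [Submodule.mem_sup, mem_range, mulVecLin_apply]
  constructor
  · rintro ⟨v, rfl⟩
    exact ⟨_, ⟨v ∘ Sum.inl, rfl⟩, _, ⟨v ∘ Sum.inr, rfl⟩, (fromCols_mulVec A B v).symm⟩
  · rintro ⟨_, ⟨v₁, rfl⟩, _, ⟨v₂, rfl⟩, rfl⟩
    exact ⟨Sum.elim v₁ v₂, fromCols_mulVec_sumElim A B v₁ v₂⟩

section

variable {m n R : Type*} [CommRing R] [Fintype m] [Fintype n]

lemma Matrix.mulVec_mulVec_eq_of_range_eq {P : Matrix m m R} {A : Matrix m n R}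
    (hP : P * P = P) (hrange : range P.mulVecLin = range A.mulVecLin) (x : n → R) :
    P *ᵥ (A *ᵥ x) = A *ᵥ x := by
  have hidem : IsIdempotentElem P.mulVecLin := by
    rw [IsIdempotentElem, Module.End.mul_eq_comp, ← Matrix.mulVecLin_mul, hP]
  exact hidem.mem_range_iff.1 (hrange ▸ mem_range_self _ x)

lemma Matrix.mulVec_mulVec_eq_of_map_ker_le {A : Matrix m n R} {X : Matrix n m R}
    {U : Matrix n n R} (hAXA : A * X * A = A)
    (hker : (ker A.mulVecLin).map U.mulVecLin ≤ ker A.mulVecLin) (x : n → R) :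
    A *ᵥ (U *ᵥ x) = (A * U * X) *ᵥ (A *ᵥ x) := by
  have hx : x - X *ᵥ (A *ᵥ x) ∈ ker A.mulVecLin := by
    simp [mulVec_sub, mulVec_mulVec, ← Matrix.mul_assoc, hAXA]
  have hUx := hker (Submodule.mem_map_of_mem hx)
  rw [mem_ker, mulVecLin_apply, mulVecLin_apply, mulVec_sub, mulVec_sub, sub_eq_zero] at hUx
  simpa only [mulVec_mulVec, Matrix.mul_assoc] using hUx

lemma Matrix.range_mulVecLin_le_of_mul_mul_eq [DecidableEq n] {A : Matrix m n R}
    {X : Matrix n m R} {U : Matrix n n R} {C P : Matrix m m R} (hAXA : A * X * A = A)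
    (hU : IsUnit U) (hker : (ker A.mulVecLin).map U.mulVecLin ≤ ker A.mulVecLin)
    (hP : P * P = P) (hrange : range P.mulVecLin = range A.mulVecLin)
    (hC : A * U * X = C * P) : range A.mulVecLin ≤ range C.mulVecLin := by
  rintro _ ⟨x, rfl⟩
  obtain ⟨x, rfl⟩ := mulVec_surjective_iff_isUnit.2 hU x
  refine ⟨A *ᵥ x, ?_⟩
  rw [mulVecLin_apply, mulVecLin_apply, mulVec_mulVec_eq_of_map_ker_le hAXA hker, hC,
    ← mulVec_mulVec, mulVec_mulVec_eq_of_range_eq hP hrange]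

end

section

variable {m n n₁ n₂ K : Type*} [Field K] [Fintype m] [Fintype n₁] [Fintype n₂]

lemma Matrix.range_mulVecLin_eq_top_of_rank_eq [Fintype n] (A : Matrix m n K)
    (h : A.rank = Fintype.card m) : range A.mulVecLin = ⊤ :=
  Submodule.eq_top_of_finrank_eq (by rw [← Matrix.rank, h, Module.finrank_fintype_fun_eq_card])

lemma Matrix.isUnit_of_range_fromCols_le [DecidableEq m] {A : Matrix m n₁ K}
    {B : Matrix m n₂ K} {C : Matrix m m K} (hrank : (fromCols A B).rank = Fintype.card m)
    (hA : range A.mulVecLin ≤ range C.mulVecLin) (hB : range B.mulVecLin ≤ range C.mulVecLin) :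
    IsUnit C := by
  have htop := range_mulVecLin_eq_top_of_rank_eq _ hrank
  rw [range_mulVecLin_fromCols] at htop
  exact mulVec_surjective_iff_isUnit.1 (range_eq_top.1 (top_unique (htop ▸ sup_le hA hB)))

end

theorem stmt_6_general (n : ℕ) (A B Astar Bstar U C PA PB : Matrix (Fin n) (Fin n) ℂ)
    (hrank : (Matrix.fromCols A B).rank = n)
    (hMPA : IsMoorePenrose A Astar) (hMPB : IsMoorePenrose B Bstar)
    (hU : U ∈ Matrix.unitaryGroup (Fin n) ℂ)
    (hkerA : (LinearMap.ker A.mulVecLin).map U.mulVecLin ≤ LinearMap.ker A.mulVecLin)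
    (hkerB : (LinearMap.ker B.mulVecLin).map U.mulVecLin ≤ LinearMap.ker B.mulVecLin)
    (hPAidem : PA * PA = PA)
    (hPArange : LinearMap.range PA.mulVecLin = LinearMap.range A.mulVecLin)
    (hPBidem : PB * PB = PB)
    (hPBrange : LinearMap.range PB.mulVecLin = LinearMap.range B.mulVecLin)
    (hCA : A * U * Astar = C * PA) (hCB : B * U * Bstar = C * PB) :
    IsUnit C := by
  have hUunit : IsUnit U := Unitary.isUnit_coe (U := ⟨U, hU⟩)
  exact isUnit_of_range_fromCols_le (by rwa [Fintype.card_fin])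
    (range_mulVecLin_le_of_mul_mul_eq hMPA.1 hUunit hkerA hPAidem hPArange hCA)
    (range_mulVecLin_le_of_mul_mul_eq hMPB.1 hUunit hkerB hPBidem hPBrange hCB)

/-- If `(A,B)` has maximal rank, `U` is a unitary leaving `Ker A` and `Ker B` invariant and
`C` satisfies `AUA⋆ = C P_A` and `BUB⋆ = C P_B`, then `C` is invertible. -/
theorem stmt_6 (n : ℕ) (A B Astar Bstar U C PA PB : Matrix (Fin n) (Fin n) ℂ)
    (hrank : (Matrix.fromCols A B).rank = n)
    (hMPA : IsMoorePenrose A Astar) (hMPB : IsMoorePenrose B Bstar)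
    (hU : U ∈ Matrix.unitaryGroup (Fin n) ℂ)
    (hkerA : (LinearMap.ker A.mulVecLin).map U.mulVecLin ≤ LinearMap.ker A.mulVecLin)
    (hkerB : (LinearMap.ker B.mulVecLin).map U.mulVecLin ≤ LinearMap.ker B.mulVecLin)
    (hPAherm : PA.IsHermitian) (hPAidem : PA * PA = PA)
    (hPArange : LinearMap.range PA.mulVecLin = LinearMap.range A.mulVecLin)
    (hPBherm : PB.IsHermitian) (hPBidem : PB * PB = PB)
    (hPBrange : LinearMap.range PB.mulVecLin = LinearMap.range B.mulVecLin)
    (hCA : A * U * Astar = C * PA) (hCB : B * U * Bstar = C * PB) :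
    IsUnit C :=
  stmt_6_general n A B Astar Bstar U C PA PB hrank hMPA hMPB hU hkerA hkerB hPAidem hPArange hPBidem
    hPBrange hCA hCB
end

section
/- Let A, B be n×n complex matrices with (A,B) of maximal rank, U a unitary matrix leaving Ker A and Ker B invariant, and suppose AUA⋆y = BUB⋆y for all y in Ran A ∩ Ran B. Then the matrix C = (AUA⋆ + BUB⋆)(P_A + P_B)^{-1} satisfies AUA⋆ = C·P_A and BUB⋆ = C·P_B. -/
/-!
The projections are forced: a hermitian idempotent with range `Ran A` equals `A A⋆`, so
`X := A U A⋆` and `Y := B U B⋆` satisfy `X P_A = X` and `Y P_B = Y`. Put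
`T := (P_A + P_B)⁻¹ P_A`. From `(P_A + P_B) T = P_A` we get `P_B T = P_A (1 - T)`, whose
columns lie in `Ran A ∩ Ran B`, where `X` and `Y` agree. Hence
`(X + Y) T = X P_A T + X P_B T = X (P_A + P_B) T = X P_A = X`; the identity for `Y` is the
same argument with the roles of `A` and `B` swapped.
-/

open Matrix

theorem IsSelfAdjoint.eq_of_mul_eq_right {R : Type*} [Mul R] [StarMul R] {p q : R}
    (hp : IsSelfAdjoint p) (hq : IsSelfAdjoint q) (hqp : q * p = p) (hpq : p * q = q) :
    p = q :=
  calc p = star (q * p) := by rw [hqp, hp.star_eq]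
    _ = p * q := by rw [star_mul, hp.star_eq, hq.star_eq]
    _ = q := hpq

namespace Matrix

variable {ι κ l R : Type*} [Fintype ι] [Fintype κ]

section CommSemiring

variable [CommSemiring R]

theorem range_mulVecLin_mul_le (M : Matrix l ι R) (N : Matrix ι κ R) :
    LinearMap.range (M * N).mulVecLin ≤ LinearMap.range M.mulVecLin := by
  rw [mulVecLin_mul]
  exact LinearMap.range_comp_le_range _ _

theorem mul_eq_mul_of_eqOn_range {X Y : Matrix l ι R} {Z : Matrix ι κ R}
    (h : ∀ y ∈ LinearMap.range Z.mulVecLin, X *ᵥ y = Y *ᵥ y) : X * Z = Y * Z :=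
  ext_iff_mulVec.mpr fun v => by
    simpa only [← mulVec_mulVec, mulVecLin_apply] using h _ ⟨v, rfl⟩

theorem mul_eq_right_of_range_le {P : Matrix ι ι R} {M : Matrix ι κ R}
    (hP : IsIdempotentElem P) (h : LinearMap.range M.mulVecLin ≤ LinearMap.range P.mulVecLin) :
    P * M = M := by
  have hPlin : IsIdempotentElem P.mulVecLin := by
    rw [IsIdempotentElem, Module.End.mul_eq_comp, ← mulVecLin_mul, hP.eq]
  have hPM := (LinearMap.IsIdempotentElem.comp_eq_right_iff hPlin M.mulVecLin).mpr h
  refine ext_iff_mulVec.mpr fun v => ?_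
  simpa only [← mulVec_mulVec, LinearMap.comp_apply, mulVecLin_apply] using
    LinearMap.congr_fun hPM v

theorem _root_.IsStarProjection.eq_of_range_mulVecLin_eq [StarRing R] {P Q : Matrix ι ι R}
    (hP : IsStarProjection P) (hQ : IsStarProjection Q)
    (h : LinearMap.range P.mulVecLin = LinearMap.range Q.mulVecLin) : P = Q :=
  hP.isSelfAdjoint.eq_of_mul_eq_right hQ.isSelfAdjoint
    (mul_eq_right_of_range_le hQ.isIdempotentElem h.le)
    (mul_eq_right_of_range_le hP.isIdempotentElem h.ge)

end CommSemiring

variable [DecidableEq ι] [CommRing R]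

theorem eq_add_mul_nonsing_inv_mul {P Q X Y : Matrix ι ι R} (hX : X * P = X) (hY : Y * Q = Y)
    (hPQ : IsUnit (P + Q))
    (hXY : ∀ y ∈ LinearMap.range P.mulVecLin ⊓ LinearMap.range Q.mulVecLin,
      X *ᵥ y = Y *ᵥ y) :
    X = (X + Y) * (P + Q)⁻¹ * P := by
  set T := (P + Q)⁻¹ * P
  have hT : (P + Q) * T = P :=
    mul_nonsing_inv_cancel_left (A := P + Q) P ((isUnit_iff_isUnit_det _).mp hPQ)
  have hQT : Q * T = P * (1 - T) := by
    rw [mul_sub, mul_one]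
    exact eq_sub_of_add_eq' (by rw [← add_mul, hT])
  have hYX : Y * (Q * T) = X * (Q * T) := by
    refine mul_eq_mul_of_eqOn_range fun y hy => (hXY y ⟨?_, range_mulVecLin_mul_le _ _ hy⟩).symm
    exact range_mulVecLin_mul_le _ _ (hQT ▸ hy)
  calc X = X * ((P + Q) * T) := by rw [hT, hX]
    _ = X * P * T + Y * Q * T := by rw [mul_assoc Y, hYX]; noncomm_ring
    _ = (X + Y) * (P + Q)⁻¹ * P := by rw [hX, hY, mul_assoc (X + Y), add_mul]

end Matrix

namespace IsMoorePenrose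

variable {n : ℕ} {A X : Matrix (Fin n) (Fin n) ℂ}

theorem isStarProjection_mul (h : IsMoorePenrose A X) : IsStarProjection (A * X) where
  isIdempotentElem := by rw [IsIdempotentElem, ← mul_assoc, h.1]
  isSelfAdjoint := h.2.2.1

theorem range_mulVecLin_mul (h : IsMoorePenrose A X) :
    LinearMap.range (A * X).mulVecLin = LinearMap.range A.mulVecLin :=
  le_antisymm (range_mulVecLin_mul_le _ _)
    (by simpa only [h.1] using range_mulVecLin_mul_le (A * X) A)

theorem eq_mul_of_isStarProjection {P : Matrix (Fin n) (Fin n) ℂ} (h : IsMoorePenrose A X)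
    (hP : IsStarProjection P) (hPA : LinearMap.range P.mulVecLin = LinearMap.range A.mulVecLin) :
    P = A * X :=
  hP.eq_of_range_mulVecLin_eq h.isStarProjection_mul (hPA.trans h.range_mulVecLin_mul.symm)

theorem mul_mul_eq_of_isStarProjection {P : Matrix (Fin n) (Fin n) ℂ} (h : IsMoorePenrose A X)
    (hP : IsStarProjection P) (hPA : LinearMap.range P.mulVecLin = LinearMap.range A.mulVecLin)
    (M : Matrix (Fin n) (Fin n) ℂ) : M * X * P = M * X := by
  rw [h.eq_mul_of_isStarProjection hP hPA, mul_assoc M, ← mul_assoc X, h.2.1]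

end IsMoorePenrose

theorem stmt_7_general (n : ℕ) (A B Astar Bstar U PA PB : Matrix (Fin n) (Fin n) ℂ)
    (hMPA : IsMoorePenrose A Astar) (hMPB : IsMoorePenrose B Bstar)
    (hPAherm : PA.IsHermitian) (hPAidem : PA * PA = PA)
    (hPArange : LinearMap.range PA.mulVecLin = LinearMap.range A.mulVecLin)
    (hPBherm : PB.IsHermitian) (hPBidem : PB * PB = PB)
    (hPBrange : LinearMap.range PB.mulVecLin = LinearMap.range B.mulVecLin)
    (hPinv : IsUnit (PA + PB))
    (hcompat : ∀ y ∈ LinearMap.range A.mulVecLin ⊓ LinearMap.range B.mulVecLin,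
      (A * U * Astar).mulVec y = (B * U * Bstar).mulVec y) :
    A * U * Astar = (A * U * Astar + B * U * Bstar) * (PA + PB)⁻¹ * PA ∧
      B * U * Bstar = (A * U * Astar + B * U * Bstar) * (PA + PB)⁻¹ * PB := by
  have hPA : IsStarProjection PA := ⟨hPAidem, hPAherm.isSelfAdjoint⟩
  have hPB : IsStarProjection PB := ⟨hPBidem, hPBherm.isSelfAdjoint⟩
  have hXPA := hMPA.mul_mul_eq_of_isStarProjection hPA hPArange (A * U)
  have hYPB := hMPB.mul_mul_eq_of_isStarProjection hPB hPBrange (B * U)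
  rw [← hPArange, ← hPBrange] at hcompat
  refine ⟨eq_add_mul_nonsing_inv_mul hXPA hYPB hPinv hcompat, ?_⟩
  rw [add_comm (A * U * Astar), add_comm PA]
  exact eq_add_mul_nonsing_inv_mul hYPB hXPA (add_comm PA PB ▸ hPinv) fun y hy =>
    (hcompat y ⟨hy.2, hy.1⟩).symm

/-- If `(A,B)` has maximal rank, `U` is unitary leaving the kernels invariant and
`AUA⋆y = BUB⋆y` for all `y ∈ Ran A ∩ Ran B`, then
`C = (AUA⋆ + BUB⋆)(P_A + P_B)⁻¹` satisfies `AUA⋆ = C P_A` and `BUB⋆ = C P_B`. -/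
theorem stmt_7 (n : ℕ) (A B Astar Bstar U PA PB : Matrix (Fin n) (Fin n) ℂ)
    (hrank : (Matrix.fromCols A B).rank = n)
    (hMPA : IsMoorePenrose A Astar) (hMPB : IsMoorePenrose B Bstar)
    (hU : U ∈ Matrix.unitaryGroup (Fin n) ℂ)
    (hkerA : (LinearMap.ker A.mulVecLin).map U.mulVecLin ≤ LinearMap.ker A.mulVecLin)
    (hkerB : (LinearMap.ker B.mulVecLin).map U.mulVecLin ≤ LinearMap.ker B.mulVecLin)
    (hPAherm : PA.IsHermitian) (hPAidem : PA * PA = PA)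
    (hPArange : LinearMap.range PA.mulVecLin = LinearMap.range A.mulVecLin)
    (hPBherm : PB.IsHermitian) (hPBidem : PB * PB = PB)
    (hPBrange : LinearMap.range PB.mulVecLin = LinearMap.range B.mulVecLin)
    (hPinv : IsUnit (PA + PB))
    (hcompat : ∀ y ∈ LinearMap.range A.mulVecLin ⊓ LinearMap.range B.mulVecLin,
      (A * U * Astar).mulVec y = (B * U * Bstar).mulVec y) :
    A * U * Astar = (A * U * Astar + B * U * Bstar) * (PA + PB)⁻¹ * PA ∧
      B * U * Bstar = (A * U * Astar + B * U * Bstar) * (PA + PB)⁻¹ * PB :=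
  stmt_7_general n A B Astar Bstar U PA PB hMPA hMPB hPAherm hPAidem hPArange hPBherm hPBidem
    hPBrange hPinv hcompat
end

section
/- Let A, B be n×n complex matrices with (A,B) of maximal rank and Ran A ∩ Ran B = {0}. Then for every unitary U leaving Ker A and Ker B invariant there exists an invertible matrix C with AU = CA and BU = CB. -/
/-!
Since `Ran A ⊕ Ran B = ℂⁿ`, a linear map `C` may be prescribed independently on the two ranges.
Invariance of `Ker A` under `U` makes `Ax ↦ AUx` well defined on `Ran A`, and likewise for `B`;
gluing the two gives `C` with `CA = AU` and `CB = BU`. Because `U` is invertible, the range of `C`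
contains `Ran (AU) + Ran (BU) = Ran A + Ran B = ℂⁿ`, so `C` is invertible.
-/

open LinearMap Submodule

namespace LinearMap

section Ring

variable {R M N P : Type*} [Ring R] [AddCommGroup M] [Module R M] [AddCommGroup N] [Module R N]
  [AddCommGroup P] [Module R P]

theorem exists_comp_rangeRestrict_eq_of_ker_le {f : M →ₗ[R] N} {g : M →ₗ[R] P}
    (h : ker f ≤ ker g) : ∃ φ : range f →ₗ[R] P, φ ∘ₗ f.rangeRestrict = g :=
  ⟨(ker f).liftQ g h ∘ₗ f.quotKerEquivRange.symm.toLinearMap, LinearMap.ext fun x =>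
    congrArg ((ker f).liftQ g h) (f.quotKerEquivRange.symm_apply_apply ((ker f).mkQ x))⟩

variable {M' : Type*} [AddCommGroup M'] [Module R M']

theorem exists_comp_eq_of_isCompl_range {f : M →ₗ[R] N} {g : M' →ₗ[R] N}
    (hfg : IsCompl (range f) (range g)) {φ : M →ₗ[R] P} {ψ : M' →ₗ[R] P}
    (hφ : ker f ≤ ker φ) (hψ : ker g ≤ ker ψ) :
    ∃ c : N →ₗ[R] P, c ∘ₗ f = φ ∧ c ∘ₗ g = ψ := by
  obtain ⟨φ', rfl⟩ := exists_comp_rangeRestrict_eq_of_ker_le hφ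
  obtain ⟨ψ', rfl⟩ := exists_comp_rangeRestrict_eq_of_ker_le hψ
  exact ⟨ofIsCompl hfg φ' ψ', LinearMap.ext fun x => ofIsCompl_apply_left hfg (f.rangeRestrict x),
    LinearMap.ext fun x => ofIsCompl_apply_right hfg (g.rangeRestrict x)⟩

theorem range_le_range_of_comp_eq_comp {f : M →ₗ[R] N} {u : M →ₗ[R] M} {c : N →ₗ[R] N}
    (hu : Function.Surjective u) (hc : c ∘ₗ f = f ∘ₗ u) : range f ≤ range c := by
  rw [← range_comp_of_range_eq_top f (range_eq_top.mpr hu), ← hc]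
  exact range_comp_le_range f c

end Ring

section DivisionRing

variable {K V V' W : Type*} [DivisionRing K] [AddCommGroup V] [Module K V] [AddCommGroup V']
  [Module K V'] [AddCommGroup W] [Module K W] [FiniteDimensional K W]

theorem exists_isUnit_comp_eq_comp_of_isCompl_range {f : V →ₗ[K] W} {g : V' →ₗ[K] W}
    {u : V →ₗ[K] V} {u' : V' →ₗ[K] V'} (hu : Function.Surjective u)
    (hu' : Function.Surjective u') (hfg : IsCompl (range f) (range g))
    (hf : ker f ≤ ker (f ∘ₗ u)) (hg : ker g ≤ ker (g ∘ₗ u')) :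
    ∃ c : Module.End K W, IsUnit c ∧ c ∘ₗ f = f ∘ₗ u ∧ c ∘ₗ g = g ∘ₗ u' := by
  obtain ⟨c, hcf, hcg⟩ := exists_comp_eq_of_isCompl_range hfg hf hg
  refine ⟨c, (isUnit_iff_range_eq_top c).mpr (top_le_iff.mp ?_), hcf, hcg⟩
  rw [← hfg.sup_eq_top]
  exact sup_le (range_le_range_of_comp_eq_comp hu hcf) (range_le_range_of_comp_eq_comp hu' hcg)

end DivisionRing

end LinearMap

namespace Matrix

theorem range_mulVecLin_fromCols_s9 {R m n n' : Type*} [CommSemiring R] [Fintype n] [Fintype n']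
    (A : Matrix m n R) (B : Matrix m n' R) :
    range (fromCols A B).mulVecLin = range A.mulVecLin ⊔ range B.mulVecLin := by
  have hcol : (fromCols A B).col = Sum.elim A.col B.col := by ext (j | j) i <;> rfl
  rw [range_mulVecLin, range_mulVecLin, range_mulVecLin, hcol, Set.Sum.elim_range, span_union]

variable {K m n : Type*} [Field K] [Fintype m] [DecidableEq m] [Fintype n] [DecidableEq n]

theorem exists_isUnit_mul_eq_mul_of_isCompl_range {A B : Matrix m n K} {U : Matrix n n K}
    (hU : IsUnit U) (hAB : IsCompl (range A.mulVecLin) (range B.mulVecLin))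
    (hA : (ker A.mulVecLin).map U.mulVecLin ≤ ker A.mulVecLin)
    (hB : (ker B.mulVecLin).map U.mulVecLin ≤ ker B.mulVecLin) :
    ∃ C : Matrix m m K, IsUnit C ∧ A * U = C * A ∧ B * U = C * B := by
  rw [map_le_iff_le_comap, ← ker_comp] at hA hB
  obtain ⟨c, hc, hcA, hcB⟩ := exists_isUnit_comp_eq_comp_of_isCompl_range
    (mulVec_surjective_iff_isUnit.mpr hU) (mulVec_surjective_iff_isUnit.mpr hU) hAB hA hB
  refine ⟨LinearMap.toMatrix' c, ?_, ?_, ?_⟩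
  · exact (MulEquiv.isUnit_map toLinAlgEquiv').mp (by simpa using hc)
  · apply toLin'.injective
    rw [toLin'_mul, toLin'_mul, toLin'_toMatrix']
    exact hcA.symm
  · apply toLin'.injective
    rw [toLin'_mul, toLin'_mul, toLin'_toMatrix']
    exact hcB.symm

end Matrix

/-- If `(A,B)` has maximal rank and `Ran A ∩ Ran B = {0}`, then every unitary `U` leaving
`Ker A` and `Ker B` invariant admits an invertible `C` with `AU = CA` and `BU = CB`. -/
theorem stmt_9 (n : ℕ) (A B : Matrix (Fin n) (Fin n) ℂ)
    (hrank : (Matrix.fromCols A B).rank = n)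
    (hranges : LinearMap.range A.mulVecLin ⊓ LinearMap.range B.mulVecLin = ⊥) :
    ∀ U ∈ Matrix.unitaryGroup (Fin n) ℂ,
      (LinearMap.ker A.mulVecLin).map U.mulVecLin ≤ LinearMap.ker A.mulVecLin →
      (LinearMap.ker B.mulVecLin).map U.mulVecLin ≤ LinearMap.ker B.mulVecLin →
      ∃ C : Matrix (Fin n) (Fin n) ℂ, IsUnit C ∧ A * U = C * A ∧ B * U = C * B := by
  intro U hU hkA hkB
  have hsup : range A.mulVecLin ⊔ range B.mulVecLin = ⊤ := by
    rw [← Matrix.range_mulVecLin_fromCols_s9]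
    exact eq_top_of_finrank_eq (hrank.trans (Module.finrank_fin_fun ℂ).symm)
  exact Matrix.exists_isUnit_mul_eq_mul_of_isCompl_range (Unitary.isUnit_coe (U := ⟨U, hU⟩))
    ⟨disjoint_iff.mpr hranges, codisjoint_iff.mpr hsup⟩ hkA hkB
end

section
/- Let A, B be n×n complex matrices with (A,B) of maximal rank, and U unitary such that there exists an invertible C with AU = CA and BU = CB. Then for every z with Bz ∈ Ran A ∩ Ran B, one has U A⋆B z = A⋆B U z (i.e., the commutator [U, A⋆B] vanishes on B^{-1}(Ran A ∩ Ran B)). -/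
/-!
The projection `P = A⋆A` onto `(Ker A)ᗮ` commutes with `U`: from `AU = CA` and
`AUᴴ = C⁻¹A`, both `U` and `Uᴴ` preserve `Ker A`, hence `U` preserves `(Ker A)ᗮ` as well.
If `Bz = Aw`, then `U A⋆B z = U P w = P U w = A⋆C A w = A⋆C B z = A⋆B U z`.
-/

open Matrix

section Semigroup

variable {R : Type*} [Semigroup R]

/-- For `P = X * A` with `A * X * A = A`, the conclusion says that `V` maps `Ker P = Ker A`
into itself. -/
theorem SemiconjBy.mul_mul_inner_inverse_mul_eq {A X V D : R} (h : SemiconjBy A V D)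
    (hX : A * X * A = A) : X * A * V * (X * A) = X * A * V := by
  calc X * A * V * (X * A) = X * (D * (A * X * A)) := by simp only [h.eq, mul_assoc]
    _ = X * A * V := by rw [hX, ← h.eq, mul_assoc]

theorem commute_of_isSelfAdjoint_of_mul_mul_eq [StarMul R] {P V : R} (hP : IsSelfAdjoint P)
    (hV : P * V * P = P * V) (hV' : P * star V * P = P * star V) : Commute V P := by
  have hVP : P * V * P = V * P := by
    simpa only [star_mul, star_star, hP.star_eq, mul_assoc] using congrArg star hV'
  exact hVP.symm.trans hV

end Semigroup

theorem stmt_10_general (n : ℕ) (A B Astar U C : Matrix (Fin n) (Fin n) ℂ)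
    (hMPA : IsMoorePenrose A Astar)
    (hU : U ∈ Matrix.unitaryGroup (Fin n) ℂ)
    (hC : IsUnit C) (hCA : A * U = C * A) (hCB : B * U = C * B) :
    ∀ z : Fin n → ℂ,
      B.mulVec z ∈ LinearMap.range A.mulVecLin ⊓ LinearMap.range B.mulVecLin →
      (U * (Astar * B)).mulVec z = ((Astar * B) * U).mulVec z := by
  obtain ⟨hAXA, -, -, hXA⟩ := hMPA
  have hCA' : SemiconjBy A (star U) ↑hC.unit⁻¹ :=
    SemiconjBy.units_inv_right (x := Unitary.toUnits ⟨U, hU⟩) (y := hC.unit) hCA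
  have hcomm : Commute U (Astar * A) :=
    commute_of_isSelfAdjoint_of_mul_mul_eq hXA
      (SemiconjBy.mul_mul_inner_inverse_mul_eq hCA hAXA)
      (hCA'.mul_mul_inner_inverse_mul_eq hAXA)
  rintro z ⟨⟨w, hw⟩, -⟩
  replace hw : A *ᵥ w = B *ᵥ z := hw
  calc (U * (Astar * B)) *ᵥ z = (U * (Astar * A)) *ᵥ w := by
        simp only [← mulVec_mulVec, hw]
    _ = (Astar * (C * A)) *ᵥ w := by rw [hcomm.eq, mul_assoc, hCA]
    _ = (Astar * B * U) *ᵥ z := by simp only [mul_assoc, hCB, ← mulVec_mulVec, hw]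

/-- If `(A,B)` has maximal rank, `U` is unitary and there is an invertible `C` with
`AU = CA`, `BU = CB`, then the commutator `[U, A⋆B]` vanishes on `B⁻¹(Ran A ∩ Ran B)`. -/
theorem stmt_10 (n : ℕ) (A B Astar U C : Matrix (Fin n) (Fin n) ℂ)
    (hrank : (Matrix.fromCols A B).rank = n)
    (hMPA : IsMoorePenrose A Astar)
    (hU : U ∈ Matrix.unitaryGroup (Fin n) ℂ)
    (hC : IsUnit C) (hCA : A * U = C * A) (hCB : B * U = C * B) :
    ∀ z : Fin n → ℂ,
      B.mulVec z ∈ LinearMap.range A.mulVecLin ⊓ LinearMap.range B.mulVecLin →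
      (U * (Astar * B)).mulVec z = ((Astar * B) * U).mulVec z :=
  stmt_10_general n A B Astar U C hMPA hU hC hCA hCB
end

section
/- Let A_v and B_v be the (d×d) matrices of the 'delta-potential' boundary conditions: A_v has rows (1,−1,0,…,0), (0,1,−1,…,0), …, (0,…,1,−1), and last row (0,…,0,k) for a real number k; B_v has all rows zero except the last row which is (1,1,…,1). Then every diagonal unitary matrix U leaving both Ker A_v and Ker B_v invariant is a scalar multiple of the identity, U = e^{iφ}·I. -/
/-- The matrix `A_v` of the delta-potential boundary conditions of strength `k`. -/
def deltaA (d : ℕ) (k : ℝ) : Matrix (Fin d) (Fin d) ℂ :=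
  Matrix.of fun i j =>
    if (i : ℕ) = d - 1 then (if (j : ℕ) = d - 1 then (k : ℂ) else 0)
    else if j = i then 1 else if (j : ℕ) = (i : ℕ) + 1 then -1 else 0

/-- The matrix `B_v` of the delta-potential boundary conditions: last row all ones. -/
def deltaB (d : ℕ) : Matrix (Fin d) (Fin d) ℂ :=
  Matrix.of fun i _ => if (i : ℕ) = d - 1 then 1 else 0

/-! `Ker B_v` is the hyperplane `∑ xᵢ = 0`. A diagonal `U = diagonal u` sends `eᵢ - eⱼ` to
`uᵢ eᵢ - uⱼ eⱼ`, which lies in it only if `uᵢ = uⱼ`; so `U = c • 1`, and unitarity forces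
`‖c‖ = 1`. -/

open Matrix

theorem mem_ker_deltaB_iff {d : ℕ} {x : Fin d → ℂ} :
    x ∈ LinearMap.ker (deltaB d).mulVecLin ↔ ∑ i, x i = 0 := by
  rw [LinearMap.mem_ker, mulVecLin_apply, funext_iff]
  refine ⟨fun h => ?_, fun h i => ?_⟩
  · rcases Nat.eq_zero_or_pos d with rfl | hd
    · simp
    · simpa [deltaB, mulVec, dotProduct] using h ⟨d - 1, by omega⟩
  · simp [deltaB, mulVec, dotProduct, h]

theorem eq_of_forall_sum_mul_eq_zero {ι R : Type*} [Fintype ι] [DecidableEq ι] [CommRing R]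
    {u : ι → R} (hu : ∀ x : ι → R, ∑ i, x i = 0 → ∑ i, u i * x i = 0) (i j : ι) :
    u i = u j := by
  have := hu (Pi.single i 1 - Pi.single j 1) (by simp)
  simpa [mul_sub, Finset.sum_sub_distrib, sub_eq_zero, Pi.single_apply] using this

theorem Matrix.IsDiag.diag_eq_of_map_ker_deltaB_le {d : ℕ} {U : Matrix (Fin d) (Fin d) ℂ}
    (hU : U.IsDiag)
    (hker : (LinearMap.ker (deltaB d).mulVecLin).map U.mulVecLin ≤
      LinearMap.ker (deltaB d).mulVecLin) (i j : Fin d) : U i i = U j j := by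
  refine eq_of_forall_sum_mul_eq_zero (u := U.diag) (fun x hx => ?_) i j
  have := hker (Submodule.mem_map_of_mem (mem_ker_deltaB_iff.mpr hx))
  rw [mem_ker_deltaB_iff, mulVecLin_apply, ← hU.diagonal_diag] at this
  simpa only [mulVec_diagonal, diag_apply] using this

theorem Matrix.IsDiag.eq_smul_one_of_diag_eq {n R : Type*} [DecidableEq n] [CommRing R]
    {U : Matrix n n R} (hU : U.IsDiag) {i₀ : n} (h : ∀ i, U i i = U i₀ i₀) :
    U = U i₀ i₀ • 1 := by
  ext i j
  rcases eq_or_ne i j with rfl | hij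
  · simp [h]
  · simp [hU hij, hij]

theorem norm_eq_one_of_smul_one_mem_unitaryGroup {n : Type*} [Fintype n] [DecidableEq n]
    [Nonempty n] {c : ℂ} (h : c • (1 : Matrix n n ℂ) ∈ unitaryGroup n ℂ) : ‖c‖ = 1 := by
  obtain ⟨i⟩ := ‹Nonempty n›
  have hi := congrFun (congrFun (mem_unitaryGroup_iff'.mp h) i) i
  simp only [star_smul, star_one, smul_mul_smul_comm, mul_one, Matrix.smul_apply, one_apply_eq,
    smul_eq_mul, RCLike.star_def, Complex.conj_mul'] at hi
  exact (pow_eq_one_iff_of_nonneg (norm_nonneg c) two_ne_zero).mp (by exact_mod_cast hi)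

theorem exists_exp_mul_I_of_norm_eq_one {c : ℂ} (hc : ‖c‖ = 1) :
    ∃ φ : ℝ, c = Complex.exp (φ * Complex.I) :=
  ⟨c.arg, by simpa [hc] using (Complex.norm_mul_exp_arg_mul_I c).symm⟩

theorem stmt_13_general (d : ℕ) (U : Matrix (Fin d) (Fin d) ℂ)
    (hUdiag : ∀ i j : Fin d, i ≠ j → U i j = 0)
    (hU : U ∈ Matrix.unitaryGroup (Fin d) ℂ)
    (hkerB : (LinearMap.ker (deltaB d).mulVecLin).map U.mulVecLin ≤
      LinearMap.ker (deltaB d).mulVecLin) :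
    ∃ φ : ℝ, U = Complex.exp (φ * Complex.I) • (1 : Matrix (Fin d) (Fin d) ℂ) := by
  rcases isEmpty_or_nonempty (Fin d) with hempty | hne
  · exact ⟨0, Subsingleton.elim _ _⟩
  obtain ⟨i₀⟩ := id hne
  have hdiag : U.IsDiag := fun i j hij => hUdiag i j hij
  have hscalar : U = U i₀ i₀ • 1 :=
    hdiag.eq_smul_one_of_diag_eq fun i => hdiag.diag_eq_of_map_ker_deltaB_le hkerB i i₀
  obtain ⟨φ, hφ⟩ := exists_exp_mul_I_of_norm_eq_one
    (norm_eq_one_of_smul_one_mem_unitaryGroup (hscalar ▸ hU))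
  exact ⟨φ, hφ ▸ hscalar⟩

/-- Every diagonal unitary matrix leaving both `Ker A_v` and `Ker B_v` invariant is a
scalar multiple `e^{iφ}·I` of the identity. -/
theorem stmt_13 (d : ℕ) (hd : 2 ≤ d) (k : ℝ) (U : Matrix (Fin d) (Fin d) ℂ)
    (hUdiag : ∀ i j : Fin d, i ≠ j → U i j = 0)
    (hU : U ∈ Matrix.unitaryGroup (Fin d) ℂ)
    (hkerA : (LinearMap.ker (deltaA d k).mulVecLin).map U.mulVecLin ≤
      LinearMap.ker (deltaA d k).mulVecLin)
    (hkerB : (LinearMap.ker (deltaB d).mulVecLin).map U.mulVecLin ≤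
      LinearMap.ker (deltaB d).mulVecLin) :
    ∃ φ : ℝ, U = Complex.exp (φ * Complex.I) • (1 : Matrix (Fin d) (Fin d) ℂ) :=
  stmt_13_general d U hUdiag hU hkerB
end
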